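/- Let π' be a picking sequence of length |I| on item set I, let r' be a ranking reported by the manipulator a₁, let x ∈ I be an item, and let t¹ be the time step at which x is picked in the allocation process with picking sequence π' and report r'. Consider the reduced instance with item set I ∖ {x}, picking sequence π'' consisting of the first |I|−1 entries of π', and report r'' obtained from r' by deleting x (all agents' rankings restricted to I ∖ {x}). Denote by S'_t (resp. S''_t) the set of items picked after the first t steps in the original (resp. reduced) instance. Then S''_t = S'_t for all t < t¹, and for every t with t¹ ≤ t ≤ |I|−1 there exists an item i ∉ S'_t ∖ {x} such that S''_t = (S'_t ∖ {x}) ∪ {i}. -/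
import Mathlib


/-- One step of the sequential allocation process: an agent with ranking `rk`
(a bijection `Fin m ≃ Fin m`, lower rank = more preferred) greedily picks the
lowest-rank item among the remaining ones (the complement of the already
picked set `S`); if nothing is left, nothing happens. -/
def pickStep {m : ℕ} (rk : Fin m ≃ Fin m) (S : Finset (Fin m)) : Finset (Fin m) :=
  S ∪ Sᶜ.filter fun i => ∀ j ∈ Sᶜ, rk i ≤ rk j

/-- `pickedFrom rpt S₀ π` : the set of items picked after running the sequential
allocation process along the (finite) picking sequence `π`, starting from the
initial picked set `S₀`, where agent `a` reports the ranking `rpt a`.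
Running the process on the full item set is `pickedFrom rpt ∅ π`; running it on
the reduced item set `I ∖ {x}` (all rankings restricted to `I ∖ {x}`, which
leaves the agents' pairwise comparisons unchanged) is faithfully simulated by
`pickedFrom rpt {x} π`, the items picked in the reduced instance being
`pickedFrom rpt {x} π ∖ {x}`. -/
def pickedFrom {A : Type*} {m : ℕ} (rpt : A → Fin m ≃ Fin m)
    (S₀ : Finset (Fin m)) (π : List A) : Finset (Fin m) :=
  π.foldl (fun S a => pickStep (rpt a) S) S₀

section aux
variable {A : Type*} {m : ℕ}

lemma subset_pickStep (rk : Fin m ≃ Fin m) (S : Finset (Fin m)) : S ⊆ pickStep rk S :=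
  Finset.subset_union_left

lemma pickStep_eq (rk : Fin m ≃ Fin m) {S : Finset (Fin m)} (h : Sᶜ.Nonempty) :
    ∃ p, p ∈ Sᶜ ∧ (∀ q ∈ Sᶜ, rk p ≤ rk q) ∧ pickStep rk S = insert p S := by
  have himg : (Sᶜ.image rk).Nonempty := h.image rk
  set p := rk.symm ((Sᶜ.image rk).min' himg) with hp
  have hrkp : rk p = (Sᶜ.image rk).min' himg := by simp [hp]
  have hpmem : p ∈ Sᶜ := by
    have hmem := Finset.min'_mem (Sᶜ.image rk) himg
    rw [Finset.mem_image] at hmem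
    obtain ⟨q, hq, hq'⟩ := hmem
    have : q = p := rk.injective (by rw [hrkp, hq'])
    rwa [← this]
  have hmin : ∀ q ∈ Sᶜ, rk p ≤ rk q := by
    intro q hq
    rw [hrkp]
    exact Finset.min'_le _ _ (Finset.mem_image_of_mem rk hq)
  refine ⟨p, hpmem, hmin, ?_⟩
  have hfilter : Sᶜ.filter (fun i => ∀ j ∈ Sᶜ, rk i ≤ rk j) = {p} := by
    ext i
    simp only [Finset.mem_filter, Finset.mem_singleton]
    constructor
    · rintro ⟨hi, hmin'⟩
      exact rk.injective (le_antisymm (hmin' p hpmem) (hmin i hi))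
    · rintro rfl; exact ⟨hpmem, hmin⟩
  rw [pickStep, hfilter, Finset.union_comm, ← Finset.insert_eq]

lemma card_pickStep (rk : Fin m ≃ Fin m) {S : Finset (Fin m)} (h : Sᶜ.Nonempty) :
    (pickStep rk S).card = S.card + 1 := by
  obtain ⟨p, hp, _, heq⟩ := pickStep_eq rk h
  rw [heq, Finset.card_insert_of_notMem (Finset.mem_compl.mp hp)]

lemma compl_nonempty_of_card_lt (S : Finset (Fin m)) (h : S.card < m) : Sᶜ.Nonempty := by
  rw [← Finset.card_pos, Finset.card_compl, Fintype.card_fin]; omega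

lemma pickStep_coupling (rk : Fin m ≃ Fin m) {S T : Finset (Fin m)} (hST : S ⊆ T)
    (hc : T.card = S.card + 1) (hT : Tᶜ.Nonempty) :
    pickStep rk S ⊆ pickStep rk T ∧ (pickStep rk T).card = (pickStep rk S).card + 1 := by
  have hTS : Tᶜ ⊆ Sᶜ := Finset.compl_subset_compl.mpr hST
  have hS : Sᶜ.Nonempty := hT.mono hTS
  obtain ⟨p, hpS, hpmin, heqS⟩ := pickStep_eq rk hS
  obtain ⟨q, hqT, hqmin, heqT⟩ := pickStep_eq rk hT
  constructor
  · rw [heqS, heqT]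
    intro i hi
    rw [Finset.mem_insert] at hi ⊢
    rcases hi with rfl | hi
    · by_cases hpT : i ∈ T
      · right; exact hpT
      · left
        have hpTc : i ∈ Tᶜ := Finset.mem_compl.mpr hpT
        exact rk.injective (le_antisymm (hpmin q (hTS hqT)) (hqmin i hpTc))
    · right; exact hST hi
  · rw [heqS, heqT, Finset.card_insert_of_notMem (Finset.mem_compl.mp hqT),
      Finset.card_insert_of_notMem (Finset.mem_compl.mp hpS), hc]

lemma card_pickedFrom (rpt : A → Fin m ≃ Fin m) (π : List A) :
    ∀ S : Finset (Fin m), S.card + π.length ≤ m →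
    (pickedFrom rpt S π).card = S.card + π.length := by
  induction π with
  | nil => intro S h; simp [pickedFrom]
  | cons a l ih =>
    intro S h
    simp only [List.length_cons] at h ⊢
    have hS : Sᶜ.Nonempty := compl_nonempty_of_card_lt S (by omega)
    have hstep : pickedFrom rpt S (a :: l) = pickedFrom rpt (pickStep (rpt a) S) l := rfl
    rw [hstep, ih _ (by rw [card_pickStep _ hS]; omega), card_pickStep _ hS]
    omega

lemma subset_pickedFrom (rpt : A → Fin m ≃ Fin m) (π : List A) :
    ∀ S : Finset (Fin m), S ⊆ pickedFrom rpt S π := by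
  induction π with
  | nil => intro S; exact subset_rfl
  | cons a l ih => intro S; exact (subset_pickStep (rpt a) S).trans (ih _)

lemma pickedFrom_take_subset (rpt : A → Fin m ≃ Fin m) (l : List A) (t : ℕ)
    (S : Finset (Fin m)) : pickedFrom rpt S (l.take t) ⊆ pickedFrom rpt S l := by
  conv_rhs => rw [← List.take_append_drop t l]
  show pickedFrom rpt S (l.take t) ⊆ pickedFrom rpt S (l.take t ++ l.drop t)
  simp only [pickedFrom, List.foldl_append]
  exact subset_pickedFrom rpt (l.drop t) _

lemma pickedFrom_coupling (rpt : A → Fin m ≃ Fin m) (π : List A) :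
    ∀ S T : Finset (Fin m), S ⊆ T → T.card = S.card + 1 → T.card + π.length ≤ m →
    pickedFrom rpt S π ⊆ pickedFrom rpt T π ∧
    (pickedFrom rpt T π).card = (pickedFrom rpt S π).card + 1 := by
  induction π with
  | nil => intro S T h1 h2 _; exact ⟨h1, h2⟩
  | cons a l ih =>
    intro S T h1 h2 h3
    simp only [List.length_cons] at h3
    have hT : Tᶜ.Nonempty := compl_nonempty_of_card_lt T (by omega)
    obtain ⟨hsub, hcard⟩ := pickStep_coupling (rpt a) h1 h2 hT
    exact ih (pickStep (rpt a) S) (pickStep (rpt a) T) hsub hcard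
      (by rw [card_pickStep _ hT]; omega)

lemma pickStep_insert (rk : Fin m ≃ Fin m) {S : Finset (Fin m)} {x : Fin m}
    (hx : x ∉ pickStep rk S) :
    pickStep rk (insert x S) = insert x (pickStep rk S) := by
  have hxS : x ∉ S := fun h => hx (subset_pickStep rk S h)
  have hS : Sᶜ.Nonempty := ⟨x, Finset.mem_compl.mpr hxS⟩
  obtain ⟨p, hp, hpmin, heq⟩ := pickStep_eq rk hS
  have hxp : x ≠ p := by
    rintro rfl; exact hx (by rw [heq]; exact Finset.mem_insert_self _ _)
  have hpI : p ∈ (insert x S)ᶜ := by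
    rw [Finset.mem_compl, Finset.mem_insert]
    push_neg
    exact ⟨fun h => hxp h.symm, Finset.mem_compl.mp hp⟩
  have hI : (insert x S)ᶜ.Nonempty := ⟨p, hpI⟩
  obtain ⟨q, hq, hqmin, heq'⟩ := pickStep_eq rk hI
  have hqS : q ∈ Sᶜ := by
    rw [Finset.mem_compl] at hq ⊢
    exact fun h => hq (Finset.mem_insert_of_mem h)
  have hqp : q = p := rk.injective (le_antisymm (hqmin p hpI) (hpmin q hqS))
  rw [heq', hqp, heq]
  exact Finset.insert_comm p x S

lemma pickedFrom_insert (rpt : A → Fin m ≃ Fin m) (π : List A) :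
    ∀ (S : Finset (Fin m)) (x : Fin m), x ∉ pickedFrom rpt S π →
    pickedFrom rpt (insert x S) π = insert x (pickedFrom rpt S π) := by
  induction π with
  | nil => intros; rfl
  | cons a l ih =>
    intro S x hx
    have hx1 : x ∉ pickStep (rpt a) S := fun h => hx (subset_pickedFrom rpt l _ h)
    have hstep : pickedFrom rpt (insert x S) (a :: l)
        = pickedFrom rpt (pickStep (rpt a) (insert x S)) l := rfl
    rw [hstep, pickStep_insert _ hx1]
    exact ih _ x hx

end aux

/-- let `π'` be a picking sequence of length `|I| = m`, `r'` a
ranking reported by the manipulator `a₁`, `x` an item, and `t¹ = j + 1` the time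
step at which `x` is picked under `(π', r')` (non-manipulators truthful).
Consider the reduced instance with item set `I ∖ {x}`, picking sequence
`π'' = π'.take (m − 1)` (the first `|I| − 1` entries) and rankings restricted to
`I ∖ {x}`.  Writing `S'_t` for the set picked after `t` steps in the original
instance and `S''_t` for the set picked after `t` steps in the reduced instance,
we have `S''_t = S'_t` for all `t < t¹`, and for every `t¹ ≤ t ≤ m − 1` there is
an item `i ∉ S'_t ∖ {x}` with `S''_t = (S'_t ∖ {x}) ∪ {i}`. -/
theorem statement17 {A : Type*} [DecidableEq A] {m : ℕ} (a₁ : A)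
    (rk : A → Fin m ≃ Fin m) (π' : List A) (hπ : π'.length = m)
    (r' : Fin m ≃ Fin m) (x : Fin m) (j : ℕ)
    (hx₁ : x ∈ pickedFrom (Function.update rk a₁ r') ∅ (π'.take (j + 1)))
    (hx₂ : x ∉ pickedFrom (Function.update rk a₁ r') ∅ (π'.take j)) :
    (∀ t ≤ j,
        pickedFrom (Function.update rk a₁ r') {x} ((π'.take (m - 1)).take t) \ {x}
          = pickedFrom (Function.update rk a₁ r') ∅ (π'.take t)) ∧
    (∀ t, j + 1 ≤ t → t ≤ m - 1 →
        ∃ i ∉ pickedFrom (Function.update rk a₁ r') ∅ (π'.take t) \ {x},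
          pickedFrom (Function.update rk a₁ r') {x} ((π'.take (m - 1)).take t) \ {x}
            = insert i (pickedFrom (Function.update rk a₁ r') ∅ (π'.take t) \ {x})) := by
  set rpt := Function.update rk a₁ r' with hrpt
  have hm : 0 < m := x.pos
  have hj : j < m := by
    by_contra h
    push_neg at h
    have htake : π'.take j = π' := List.take_of_length_le (by omega)
    rw [htake] at hx₂
    have hcard : (pickedFrom rpt ∅ π').card = m := by
      have := card_pickedFrom rpt π' ∅ (by simp [hπ])
      simpa [hπ] using this
    have huniv : pickedFrom rpt ∅ π' = Finset.univ :=
      Finset.eq_univ_of_card _ (by rw [hcard, Fintype.card_fin])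
    exact hx₂ (huniv ▸ Finset.mem_univ x)
  constructor
  · intro t ht
    have htm : t ≤ m - 1 := by omega
    have hts : (π'.take (m-1)).take t = π'.take t := by
      rw [List.take_take, min_eq_left htm]
    rw [hts]
    have hxt : x ∉ pickedFrom rpt ∅ (π'.take t) := by
      intro h
      apply hx₂
      have heq : π'.take t = (π'.take j).take t := by rw [List.take_take, min_eq_left ht]
      rw [heq] at h
      exact pickedFrom_take_subset rpt (π'.take j) t ∅ h
    have h1 : ({x} : Finset (Fin m)) = insert x ∅ := by simp
    have h2 : pickedFrom rpt {x} (π'.take t) = insert x (pickedFrom rpt ∅ (π'.take t)) := by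
      rw [h1]; exact pickedFrom_insert rpt _ ∅ x hxt
    rw [h2, Finset.sdiff_singleton_eq_erase, Finset.erase_insert hxt]
  · intro t ht1 ht2
    have hts : (π'.take (m-1)).take t = π'.take t := by
      rw [List.take_take, min_eq_left ht2]
    rw [hts]
    have hlen : (π'.take t).length = t := by rw [List.length_take, hπ]; omega
    obtain ⟨hsub, hcard⟩ := pickedFrom_coupling rpt (π'.take t) ∅ {x}
      (Finset.empty_subset _) (by simp) (by rw [Finset.card_singleton, hlen]; omega)
    set S' := pickedFrom rpt ∅ (π'.take t) with hS'
    set T' := pickedFrom rpt {x} (π'.take t) with hT'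
    have hdiff : (T' \ S').card = 1 := by rw [Finset.card_sdiff_of_subset hsub]; omega
    obtain ⟨i, hi⟩ := Finset.card_eq_one.mp hdiff
    have hiTS : i ∈ T' \ S' := hi ▸ Finset.mem_singleton_self i
    have hiS : i ∉ S' := (Finset.mem_sdiff.mp hiTS).2
    have hxS' : x ∈ S' := by
      have heq : π'.take (j+1) = (π'.take t).take (j+1) := by
        rw [List.take_take, min_eq_left ht1]
      rw [hS']
      refine pickedFrom_take_subset rpt (π'.take t) (j+1) ∅ ?_
      rwa [← heq]
    have hix : i ≠ x := fun h => hiS (h ▸ hxS')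
    refine ⟨i, ?_, ?_⟩
    · rw [Finset.mem_sdiff]; push_neg; intro h; exact absurd h hiS
    · have hT'eq : T' = insert i S' := by
        have hu := Finset.union_sdiff_of_subset hsub
        rw [hi] at hu
        rw [← hu, Finset.union_comm]
        exact (Finset.insert_eq i S').symm
      rw [hT'eq, Finset.insert_sdiff_of_notMem _ (by simp [hix])]
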